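/- If T is a tree whose locally irregular chromatic index equals 3, then every vertex of maximum degree in T has a neighbor of the same (maximum) degree. -/

import Mathlib

/-!
Suppose a vertex `v` of maximum degree `Δ` has only neighbours of smaller degree; we build a
locally irregular red/blue edge coloring. Root the tree at `v`. Call `δ` *achievable* at a
vertex `u` if the edges below `u` and the edge from `u` to its parent can be colored so that
every edge below `u` is irregular and `u` has degree `δ` in the color of its parent edge. If
`δ - 1` of the `m` children of `u` share that color and the other `r = m + 1 - δ` do not, each
child must achieve a value different from `δ`, resp. `r`. A child with two achievable values never
obstructs, and counting the children with a single achievable value shows inductively that every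
vertex has two achievable values or one that is at most `4`. At the root all edges get the same
color: each child `w` achieves some value, which is at most `deg w < Δ`.
-/

/-- The number of edges of color `c` incident to vertex `v` under edge coloring `φ`
(the `c`-degree of `v`). -/
noncomputable def colorDeg {V α : Type*} (G : SimpleGraph V)
    (φ : Sym2 V → α) (c : α) (v : V) : ℕ :=
  Nat.card {w : V // G.Adj v w ∧ φ s(v, w) = c}

/-- An edge coloring of `G` is locally irregular if within every color class the
endpoints of each edge have distinct degrees (isolated vertices are irrelevant). -/
def IsLocIrrColoring {V α : Type*} (G : SimpleGraph V) (φ : Sym2 V → α) : Prop :=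
  ∀ ⦃v w : V⦄, G.Adj v w →
    colorDeg G φ (φ s(v, w)) v ≠ colorDeg G φ (φ s(v, w)) w

open Finset

/-- `b t` counts the children whose only achievable value is `t`. Giving the parent edge's color
to `δ - 1` children and the other color to `r` children, those forced to `r` must be among the
former and those forced to `δ` among the latter. -/
def IsAdmissibleSplit (b : ℕ → ℕ) (δ r : ℕ) : Prop :=
  b r < δ ∧ b δ ≤ r ∧ (r = δ → b r = 0)

theorem exists_isAdmissibleSplit {m : ℕ} {b : ℕ → ℕ} (hb0 : b 0 = 0)
    (hb5 : ∀ t, 5 ≤ t → b t = 0) (hsum : b 1 + b 2 + b 3 + b 4 ≤ m) :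
    ∃ δ₁ r₁ δ₂ r₂, δ₁ + r₁ = m + 1 ∧ δ₂ + r₂ = m + 1 ∧ IsAdmissibleSplit b δ₁ r₁ ∧
      IsAdmissibleSplit b δ₂ r₂ ∧ (δ₁ ≤ 4 ∨ δ₁ ≠ δ₂) := by
  unfold IsAdmissibleSplit
  -- For `m ≥ 4`, all children may share the parent's color, or all but one or two of them.
  rcases Nat.lt_or_ge m 6 with hm | hm
  · have := hb5 5 le_rfl
    have := hb5 6 (by norm_num)
    interval_cases m
    · exact ⟨1, 0, 1, 0, by omega⟩
    · by_cases h : b 2 = 0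
      · exact ⟨2, 0, 2, 0, by omega⟩
      · exact ⟨1, 1, 1, 1, by omega⟩
    · by_cases h : b 3 = 0
      · exact ⟨3, 0, 3, 0, by omega⟩
      · exact ⟨2, 1, 2, 1, by omega⟩
    · by_cases h : b 4 = 0
      · exact ⟨4, 0, 4, 0, by omega⟩
      by_cases h' : b 3 ≤ 1
      · exact ⟨3, 1, 3, 1, by omega⟩
      · exact ⟨2, 2, 2, 2, by omega⟩
    · by_cases h : b 1 ≤ 3 ∧ b 4 ≤ 1
      · exact ⟨5, 0, 4, 1, by omega⟩
      · exact ⟨5, 0, 3, 2, by omega⟩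
    · by_cases h : b 1 ≤ 4
      · exact ⟨6, 0, 5, 1, by omega⟩
      · exact ⟨6, 0, 4, 2, by omega⟩
  · obtain ⟨k, rfl⟩ := Nat.exists_eq_add_of_le' hm
    have := hb5 (k + 7) (by omega)
    have := hb5 (k + 6) (by omega)
    have := hb5 (k + 5) (by omega)
    by_cases h : b 1 ≤ k + 5
    · exact ⟨k + 7, 0, k + 6, 1, by omega⟩
    · exact ⟨k + 7, 0, k + 5, 2, by omega⟩

/-- A rooted tree presented by its parent map; `depth` certifies that following parents leads to
the root. The value of `parent root` is irrelevant. -/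
structure ParentTree (V : Type*) where
  root : V
  parent : V → V
  depth : V → ℕ
  depth_parent : ∀ x, x ≠ root → depth (parent x) + 1 = depth x

namespace ParentTree

variable {V : Type*} [DecidableEq V] (T : ParentTree V)

def propagate {α : Type*} (a : α) (step : V → α → α) (x : V) : α :=
  if x = T.root then a else step x (propagate a step (T.parent x))
termination_by T.depth x
decreasing_by have := T.depth_parent x ‹_›; omega

@[simp]
theorem propagate_root {α : Type*} (a : α) (step : V → α → α) :
    T.propagate a step T.root = a := by
  rw [propagate, if_pos rfl]

theorem propagate_of_ne_root {α : Type*} (a : α) (step : V → α → α) {x : V}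
    (hx : x ≠ T.root) : T.propagate a step x = step x (T.propagate a step (T.parent x)) := by
  rw [propagate, if_neg hx]

theorem propagate_induction {α : Type*} {a : α} {step : V → α → α} {P : V → α → Prop}
    (h_root : P T.root a) (h_step : ∀ x ≠ T.root, ∀ b, P (T.parent x) b → P x (step x b))
    (x : V) : P x (T.propagate a step x) := by
  by_cases hx : x = T.root
  · subst hx
    rwa [propagate_root]
  · rw [T.propagate_of_ne_root a step hx]
    exact h_step x hx _ (propagate_induction h_root h_step (T.parent x))
termination_by T.depth x
decreasing_by have := T.depth_parent x hx; omega

def graph : SimpleGraph V := SimpleGraph.fromRel fun x y => x ≠ T.root ∧ T.parent x = y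

variable [Fintype V]

def children (u : V) : Finset V := {x | x ≠ T.root ∧ T.parent x = u}

variable {T}

@[simp]
theorem mem_children {u x : V} : x ∈ T.children u ↔ x ≠ T.root ∧ T.parent x = u := by
  simp [children]

theorem depth_of_mem_children {u x : V} (hx : x ∈ T.children u) : T.depth x = T.depth u + 1 := by
  obtain ⟨hr, rfl⟩ := mem_children.1 hx
  exact (T.depth_parent x hr).symm

theorem ne_of_mem_children {u x : V} (hx : x ∈ T.children u) : x ≠ u := by
  rintro rfl
  have := depth_of_mem_children hx
  omega

theorem graph_adj {x y : V} : T.graph.Adj x y ↔ x ∈ T.children y ∨ y ∈ T.children x := by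
  rw [graph, SimpleGraph.fromRel_adj, ← mem_children, ← mem_children, and_iff_right_iff_imp]
  rintro (h | h)
  exacts [ne_of_mem_children h, (ne_of_mem_children h).symm]

variable (T) in
theorem induction_children {P : V → Prop} (ih : ∀ u, (∀ x ∈ T.children u, P x) → P u)
    (u : V) : P u :=
  ih u fun x _ => induction_children ih x
termination_by univ.sup T.depth - T.depth u
decreasing_by
  have := depth_of_mem_children ‹x ∈ _›
  have := le_sup (f := T.depth) (mem_univ x)
  omega

end ParentTree

namespace SimpleGraph

variable {V : Type*} {G : SimpleGraph V}

theorem IsTree.exists_adj_dist_add_one_eq (hG : G.IsTree) (v : V) {x : V} (hx : x ≠ v) :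
    ∃ y, G.Adj x y ∧ G.dist v y + 1 = G.dist v x := by
  obtain ⟨p, hp⟩ := hG.connected.exists_walk_length_eq_dist x v
  cases p with
  | nil => exact absurd rfl hx
  | @cons _ y _ hadj q =>
    refine ⟨y, hadj, ?_⟩
    have hq := dist_le q
    rw [Walk.length_cons, dist_comm] at hp
    rw [dist_comm] at hq
    have := hG.dist_eq_dist_add_one_of_adj v hadj
    omega

theorem IsTree.eq_of_adj_of_dist_add_one_eq (hG : G.IsTree) {v x y y' : V}
    (hy : G.Adj x y) (hdy : G.dist v y + 1 = G.dist v x)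
    (hy' : G.Adj x y') (hdy' : G.dist v y' + 1 = G.dist v x) : y = y' := by
  classical
  obtain ⟨P, hP, -⟩ := hG.connected.exists_path_of_dist v x
  suffices h : ∀ z, G.Adj x z → G.dist v z + 1 = G.dist v x → z = P.penultimate from
    (h y hy hdy).trans (h y' hy' hdy').symm
  intro z hz hdz
  obtain ⟨q, hq, hql⟩ := hG.connected.exists_path_of_dist v z
  have hxq : x ∉ q.support := fun hx => by
    have := dist_le (q.takeUntil x hx)
    have := q.length_takeUntil_le_length hx
    omega
  exact hG.isAcyclic.eq_penultimate_of_adj_end hP hz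
    (hG.isAcyclic.mem_support_of_ne_mem_support_of_adj_of_isPath hP hq hz hxq)

theorem IsTree.exists_parentTree_graph_eq (hG : G.IsTree) (v : V) :
    ∃ T : ParentTree V, T.root = v ∧ T.graph = G := by
  classical
  choose p hp_adj hp_dist using fun x (hx : x ≠ v) => hG.exists_adj_dist_add_one_eq v hx
  let T : ParentTree V :=
    ⟨v, fun x => if hx : x = v then v else p x hx, G.dist v, fun x hx => by simp [hx, hp_dist]⟩
  have parent_eq {x y : V} (hxy : G.Adj x y) (hd : G.dist v x = G.dist v y + 1) :
      x ≠ v ∧ T.parent x = y := by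
    have hx : x ≠ v := by rintro rfl; simp at hd
    refine ⟨hx, ?_⟩
    simpa [T, hx] using hG.eq_of_adj_of_dist_add_one_eq (hp_adj x hx) (hp_dist x hx) hxy hd.symm
  refine ⟨T, rfl, ?_⟩
  ext x y
  rw [ParentTree.graph, fromRel_adj]
  constructor
  · rintro ⟨-, ⟨hx, rfl⟩ | ⟨hy, rfl⟩⟩
    · simpa [T, hx] using hp_adj x hx
    · simpa [T, hy] using (hp_adj y hy).symm
  · intro hxy
    refine ⟨hxy.ne, ?_⟩
    rcases hG.dist_eq_dist_add_one_of_adj v hxy with hd | hd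
    exacts [.inl (parent_eq hxy hd), .inr (parent_eq hxy.symm hd)]

end SimpleGraph

theorem colorDeg_eq_card_filter {V α : Type*} [Fintype V] [DecidableEq α] (G : SimpleGraph V)
    [DecidableRel G.Adj] (φ : Sym2 V → α) (c : α) (v : V) :
    colorDeg G φ c v = #{w ∈ G.neighborFinset v | φ s(v, w) = c} := by
  rw [colorDeg, Nat.card_eq_fintype_card, Fintype.card_subtype,
    SimpleGraph.neighborFinset_eq_filter, filter_filter]

namespace ParentTree

variable {V : Type*} [DecidableEq V] [Fintype V] {T : ParentTree V} {u : V} {δ : ℕ}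

theorem parent_notMem_children (hu : u ≠ T.root) : T.parent u ∉ T.children u := fun h => by
  have := depth_of_mem_children h
  have := T.depth_parent u hu
  omega

theorem neighborFinset_graph_root [DecidableRel T.graph.Adj] :
    T.graph.neighborFinset T.root = T.children T.root := by
  ext x
  simp only [SimpleGraph.mem_neighborFinset, graph_adj, mem_children]
  grind

theorem neighborFinset_graph_of_ne_root [DecidableRel T.graph.Adj] (hu : u ≠ T.root) :
    T.graph.neighborFinset u = insert (T.parent u) (T.children u) := by
  ext x
  simp only [SimpleGraph.mem_neighborFinset, graph_adj, mem_insert, mem_children]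
  grind

theorem degree_graph_root [DecidableRel T.graph.Adj] :
    T.graph.degree T.root = #(T.children T.root) := by
  rw [← SimpleGraph.card_neighborFinset_eq_degree, neighborFinset_graph_root]

theorem degree_graph_of_ne_root [DecidableRel T.graph.Adj] (hu : u ≠ T.root) :
    T.graph.degree u = #(T.children u) + 1 := by
  rw [← SimpleGraph.card_neighborFinset_eq_degree, neighborFinset_graph_of_ne_root hu,
    card_insert_of_notMem (parent_notMem_children hu)]

variable (T) in
/-- `col x` is the color of the edge from `x` to its parent. -/
def colorDegree (col : V → Fin 2) (c : Fin 2) (u : V) : ℕ :=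
  (if u ≠ T.root ∧ col u = c then 1 else 0) + #{x ∈ T.children u | col x = c}

variable (T) in
def edgeColoring (col : V → Fin 2) : Sym2 V → Fin 2 :=
  Sym2.lift ⟨fun x y => if T.depth x < T.depth y then col y
    else if T.depth y < T.depth x then col x else 0, fun x y => by grind⟩

theorem edgeColoring_of_mem_children (col : V → Fin 2) {u x : V} (hx : x ∈ T.children u) :
    T.edgeColoring col s(u, x) = col x := by
  simp [edgeColoring, depth_of_mem_children hx]

theorem colorDeg_graph_edgeColoring (col : V → Fin 2) (c : Fin 2) (u : V) :
    colorDeg T.graph (T.edgeColoring col) c u = T.colorDegree col c u := by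
  classical
  have hchildren : {x ∈ T.children u | T.edgeColoring col s(u, x) = c} =
      {x ∈ T.children u | col x = c} :=
    filter_congr fun x hx => by rw [edgeColoring_of_mem_children col hx]
  rw [colorDeg_eq_card_filter, colorDegree]
  by_cases hu : u = T.root
  · subst hu
    simp [neighborFinset_graph_root, hchildren]
  · have hparent : T.edgeColoring col s(u, T.parent u) = col u := by
      rw [Sym2.eq_swap, edgeColoring_of_mem_children col (mem_children.2 ⟨hu, rfl⟩)]
    rw [neighborFinset_graph_of_ne_root hu, filter_insert, hparent, hchildren]
    by_cases h : col u = c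
    · rw [if_pos h, if_pos ⟨hu, h⟩, add_comm,
        card_insert_of_notMem fun h' => parent_notMem_children hu (mem_filter.1 h').1]
    · rw [if_neg h, if_neg fun h' => h h'.2, zero_add]

variable (T) in
/-- The edges below `u`, together with a parent edge at `u`, admit a 2-coloring that is locally
irregular at every edge below `u` and gives `u` degree `#S + 1` in the color of the parent edge:
the children in `S` share that color, and the child `x` achieves `val x`. -/
inductive Achievable : V → ℕ → Prop
  | intro {u : V} (S : Finset V) (val : V → ℕ) :
      S ⊆ T.children u → (∀ x ∈ T.children u, Achievable x (val x)) →
      (∀ x ∈ S, val x ≠ #S + 1) → (∀ x ∈ T.children u \ S, val x ≠ #(T.children u \ S)) →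
      Achievable u (#S + 1)

theorem Achievable.exists_split (h : T.Achievable u δ) :
    ∃ (S : Finset V) (val : V → ℕ), S ⊆ T.children u ∧ #S + 1 = δ ∧
      (∀ x ∈ T.children u, T.Achievable x (val x)) ∧ (∀ x ∈ S, val x ≠ δ) ∧
      ∀ x ∈ T.children u \ S, val x ≠ #(T.children u \ S) := by
  obtain ⟨S, val, hS, hval, hin, hout⟩ := h
  exact ⟨S, val, hS, rfl, hval, hin, hout⟩

theorem Achievable.one_le (h : T.Achievable u δ) : 1 ≤ δ := by
  obtain ⟨S, -⟩ := h
  omega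

theorem Achievable.le_card_children_add_one (h : T.Achievable u δ) :
    δ ≤ #(T.children u) + 1 := by
  obtain ⟨S, val, hS, -⟩ := h
  exact Nat.succ_le_succ (card_le_card hS)

theorem achievable_of_forall_exists {S : Finset V} (hS : S ⊆ T.children u)
    (hin : ∀ x ∈ S, ∃ δ ≠ #S + 1, T.Achievable x δ)
    (hout : ∀ x ∈ T.children u \ S, ∃ δ ≠ #(T.children u \ S), T.Achievable x δ) :
    T.Achievable u (#S + 1) := by
  have : ∀ x ∈ T.children u, ∃ δ, T.Achievable x δ ∧ (x ∈ S → δ ≠ #S + 1) ∧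
      (x ∉ S → δ ≠ #(T.children u \ S)) := by
    intro x hx
    by_cases hxS : x ∈ S
    · obtain ⟨δ, hδ, h⟩ := hin x hxS
      exact ⟨δ, h, fun _ => hδ, absurd hxS⟩
    · obtain ⟨δ, hδ, h⟩ := hout x (mem_sdiff.2 ⟨hx, hxS⟩)
      exact ⟨δ, h, fun h => absurd h hxS, fun _ => hδ⟩
  choose! val hval using this
  exact .intro S val hS (fun x hx => (hval x hx).1) (fun x hx => (hval x (hS hx)).2.1 hx)
    fun x hx => (hval x (mem_sdiff.1 hx).1).2.2 (mem_sdiff.1 hx).2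

variable (T) in
open Classical in
noncomputable def forced (u : V) (t : ℕ) : Finset V :=
  {x ∈ T.children u | ∀ δ, T.Achievable x δ → δ = t}

theorem mem_forced {t : ℕ} {x : V} :
    x ∈ T.forced u t ↔ x ∈ T.children u ∧ ∀ δ, T.Achievable x δ → δ = t := by
  simp [forced]

theorem forced_subset (t : ℕ) : T.forced u t ⊆ T.children u := fun _ hx => (mem_forced.1 hx).1

theorem disjoint_forced (hne : ∀ x ∈ T.children u, ∃ δ, T.Achievable x δ) {t t' : ℕ}
    (htt' : t ≠ t') : Disjoint (T.forced u t) (T.forced u t') := by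
  refine disjoint_left.2 fun x hx hx' => ?_
  rw [mem_forced] at hx hx'
  obtain ⟨δ, hδ⟩ := hne x hx.1
  exact htt' ((hx.2 δ hδ).symm.trans (hx'.2 δ hδ))

theorem achievable_of_isAdmissibleSplit (hne : ∀ x ∈ T.children u, ∃ δ, T.Achievable x δ)
    {r : ℕ} (hδr : δ + r = #(T.children u) + 1)
    (h : IsAdmissibleSplit (fun t => #(T.forced u t)) δ r) : T.Achievable u δ := by
  obtain ⟨hF, hB, hmid⟩ := h
  dsimp only at hF hB hmid
  have hFB : T.forced u r ⊆ T.children u \ T.forced u δ := by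
    intro x hx
    refine mem_sdiff.2 ⟨forced_subset _ hx, fun hxB => ?_⟩
    by_cases heq : r = δ
    · rw [card_eq_zero.1 (hmid heq)] at hx
      exact notMem_empty x hx
    · exact disjoint_left.1 (disjoint_forced hne heq) hx hxB
  obtain ⟨S, hFS, hSB, hcard⟩ := exists_subsuperset_card_eq hFB (Nat.le_sub_one_of_lt hF)
    (by rw [card_sdiff_of_subset (forced_subset _)]; omega)
  have hSC : S ⊆ T.children u := hSB.trans sdiff_subset
  have hcompl : #(T.children u \ S) = r := by rw [card_sdiff_of_subset hSC, hcard]; omega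
  obtain rfl : δ = #S + 1 := by omega
  refine achievable_of_forall_exists hSC (fun x hx => ?_) fun x hx => ?_
  · have hxB : x ∉ T.forced u (#S + 1) := (mem_sdiff.1 (hSB hx)).2
    simp only [mem_forced, not_and, not_forall] at hxB
    obtain ⟨δ, hδ, hne⟩ := hxB (hSC hx)
    exact ⟨δ, hne, hδ⟩
  · have hxF : x ∉ T.forced u r := fun h => (mem_sdiff.1 hx).2 (hFS h)
    simp only [mem_forced, not_and, not_forall] at hxF
    obtain ⟨δ, hδ, hne⟩ := hxF (mem_sdiff.1 hx).1
    exact ⟨δ, hcompl ▸ hne, hδ⟩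

variable (T) in
def IsFlexible (u : V) : Prop :=
  (∃ δ ≤ 4, T.Achievable u δ) ∨ ∃ δ₁ δ₂, δ₁ ≠ δ₂ ∧ T.Achievable u δ₁ ∧ T.Achievable u δ₂

theorem IsFlexible.exists_achievable (h : T.IsFlexible u) : ∃ δ, T.Achievable u δ := by
  rcases h with ⟨δ, -, hδ⟩ | ⟨δ, -, -, hδ, -⟩
  exacts [⟨δ, hδ⟩, ⟨δ, hδ⟩]

theorem IsFlexible.forced_mem_Icc (h : T.IsFlexible u) {t : ℕ}
    (ht : ∀ δ, T.Achievable u δ → δ = t) : t ∈ Icc 1 4 := by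
  rcases h with ⟨δ, hδ4, hδ⟩ | ⟨δ₁, δ₂, hne, h₁, h₂⟩
  · have := hδ.one_le
    have := ht δ hδ
    simp only [mem_Icc]
    omega
  · exact absurd ((ht δ₁ h₁).trans (ht δ₂ h₂).symm) hne

theorem sum_card_forced_le (h : ∀ x ∈ T.children u, T.IsFlexible x) :
    #(T.forced u 1) + #(T.forced u 2) + #(T.forced u 3) + #(T.forced u 4) ≤
      #(T.children u) := by
  have hne x hx := (h x hx).exists_achievable
  calc _ = ∑ t ∈ {1, 2, 3, 4}, #(T.forced u t) := by simp [add_assoc]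
    _ = #(({1, 2, 3, 4} : Finset ℕ).biUnion (T.forced u)) :=
      (card_biUnion fun t _ t' _ htt' => disjoint_forced hne htt').symm
    _ ≤ _ := card_le_card (biUnion_subset.2 fun t _ => forced_subset t)

variable (T) in
theorem isFlexible (u : V) : T.IsFlexible u := by
  refine T.induction_children (fun u ih => ?_) u
  have hne x hx := (ih x hx).exists_achievable
  have hzero {t : ℕ} (ht : t ∉ Icc 1 4) : #(T.forced u t) = 0 :=
    card_eq_zero.2 <| eq_empty_of_forall_notMem fun x hx =>
      ht ((ih x (mem_forced.1 hx).1).forced_mem_Icc (mem_forced.1 hx).2)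
  obtain ⟨δ₁, r₁, δ₂, r₂, h₁, h₂, hsplit₁, hsplit₂, hδ⟩ :=
    exists_isAdmissibleSplit (b := fun t => #(T.forced u t)) (hzero (by simp))
      (fun t ht => hzero (by rw [mem_Icc]; omega)) (sum_card_forced_le ih)
  have hach₁ := achievable_of_isAdmissibleSplit hne h₁ hsplit₁
  rcases hδ with hδ | hδ
  · exact .inl ⟨δ₁, hδ, hach₁⟩
  · exact .inr ⟨δ₁, δ₂, hδ, hach₁, achievable_of_isAdmissibleSplit hne h₂ hsplit₂⟩

/-- The root has no parent edge; value `1` puts all its children in the other color, in which the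
root then has its full degree. -/
theorem achievable_root_one
    (h : ∀ x ∈ T.children T.root, #(T.children x) + 1 < #(T.children T.root)) :
    T.Achievable T.root 1 := by
  refine achievable_of_forall_exists (empty_subset _) (by simp) fun x hx => ?_
  obtain ⟨δ, hδ⟩ := (T.isFlexible x).exists_achievable
  have := hδ.le_card_children_add_one
  have := h x (mem_sdiff.1 hx).1
  exact ⟨δ, by rw [sdiff_empty]; omega, hδ⟩

theorem colorDegree_of_split {col : V → Fin 2} {S : Finset V} (hS : S ⊆ T.children u)
    (hcol : ∀ x ∈ T.children u, col x = if x ∈ S then col u else col u + 1) :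
    T.colorDegree col (col u) u = (if u ≠ T.root then 1 else 0) + #S ∧
      T.colorDegree col (col u + 1) u = #(T.children u \ S) := by
  have hne : ∀ c : Fin 2, c + 1 ≠ c := by decide
  have hsame : {x ∈ T.children u | col x = col u} = S := by
    ext x
    rw [mem_filter]
    constructor
    · rintro ⟨hx, h⟩
      by_contra hxS
      rw [hcol x hx, if_neg hxS] at h
      exact hne _ h
    · intro hxS
      exact ⟨hS hxS, by rw [hcol x (hS hxS), if_pos hxS]⟩
  have hother : {x ∈ T.children u | col x = col u + 1} = T.children u \ S := by
    ext x
    rw [mem_filter, mem_sdiff]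
    constructor
    · rintro ⟨hx, h⟩
      refine ⟨hx, fun hxS => ?_⟩
      rw [hcol x hx, if_pos hxS] at h
      exact hne _ h.symm
    · rintro ⟨hx, hxS⟩
      exact ⟨hx, by rw [hcol x hx, if_neg hxS]⟩
  simp [colorDegree, hsame, hother, (hne _).symm]

theorem exists_coloring_of_achievable_root (h : T.Achievable T.root 1) :
    ∃ col : V → Fin 2, ∀ u, ∀ x ∈ T.children u,
      T.colorDegree col (col x) u ≠ T.colorDegree col (col x) x := by
  choose! S val hS hcard hval hin hout using fun u δ (h : T.Achievable u δ) => h.exists_split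
  -- Each vertex is labelled top-down by its parent edge's color and the value it achieves.
  let label := T.propagate ((0 : Fin 2), 1) fun x (l : Fin 2 × ℕ) =>
    (if x ∈ S (T.parent x) l.2 then l.1 else l.1 + 1, val (T.parent x) l.2 x)
  let col x := (label x).1
  let δ x := (label x).2
  have hach : ∀ x, T.Achievable x (δ x) :=
    T.propagate_induction (P := fun x (l : Fin 2 × ℕ) => T.Achievable x l.2) (by simpa using h)
      fun x hx l hl => hval _ _ hl x (mem_children.2 ⟨hx, rfl⟩)
  have hchild {u x : V} (hx : x ∈ T.children u) :
      col x = (if x ∈ S u (δ u) then col u else col u + 1) ∧ δ x = val u (δ u) x := by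
    obtain ⟨hr, rfl⟩ := mem_children.1 hx
    simp only [col, δ, label, T.propagate_of_ne_root _ _ hr, and_self]
  have hdeg u := colorDegree_of_split (hS u (δ u) (hach u)) fun x hx => (hchild hx).1
  refine ⟨col, fun u x hx => ?_⟩
  have hxδ : T.colorDegree col (col x) x = δ x := by
    rw [(hdeg x).1, if_pos (mem_children.1 hx).1, add_comm, hcard _ _ (hach x)]
  rw [hxδ, (hchild hx).2, (hchild hx).1]
  by_cases hxS : x ∈ S u (δ u)
  · have hu : u ≠ T.root := by
      rintro rfl
      have hδ : δ T.root = 1 := by simp [δ, label]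
      have := hcard _ _ (hach T.root)
      rw [hδ, add_eq_right, card_eq_zero] at this
      rw [hδ, this] at hxS
      exact notMem_empty x hxS
    rw [if_pos hxS, (hdeg u).1, if_pos hu, add_comm, hcard _ _ (hach u)]
    exact (hin _ _ (hach u) x hxS).symm
  · rw [if_neg hxS, (hdeg u).2]
    exact (hout _ _ (hach u) x (mem_sdiff.2 ⟨hx, hxS⟩)).symm

theorem exists_isLocIrrColoring
    (h : ∀ x ∈ T.children T.root, #(T.children x) + 1 < #(T.children T.root)) :
    ∃ φ : Sym2 V → Fin 2, IsLocIrrColoring T.graph φ := by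
  obtain ⟨col, hcol⟩ := exists_coloring_of_achievable_root (achievable_root_one h)
  refine ⟨T.edgeColoring col, fun x y hxy => ?_⟩
  simp only [colorDeg_graph_edgeColoring]
  rcases graph_adj.1 hxy with hx | hy
  · rw [Sym2.eq_swap, edgeColoring_of_mem_children col hx]
    exact (hcol y x hx).symm
  · rw [edgeColoring_of_mem_children col hy]
    exact hcol x y hy

end ParentTree

theorem tree_index_three_max_degree_pairs_general {V : Type*} [Fintype V] [DecidableEq V]
    (G : SimpleGraph V) [DecidableRel G.Adj] (hT : G.IsTree)
    (h2 : ¬ ∃ φ : Sym2 V → Fin 2, IsLocIrrColoring G φ) :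
    ∀ v : V, G.degree v = G.maxDegree →
      ∃ w : V, G.Adj v w ∧ G.degree w = G.degree v := by
  intro v hv
  by_contra! hlt
  obtain ⟨T, rfl, rfl⟩ := hT.exists_parentTree_graph_eq v
  refine h2 (T.exists_isLocIrrColoring fun x hx => ?_)
  have hle := T.graph.degree_le_maxDegree x
  have hne := hlt x (ParentTree.graph_adj.2 (.inr hx))
  rw [← hv] at hle
  rw [ParentTree.degree_graph_root,
    ParentTree.degree_graph_of_ne_root (ParentTree.mem_children.1 hx).1] at hle hne
  omega

/-- If T is a tree whose locally irregular chromatic index equals 3 (it admits a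
locally irregular 3-edge coloring but no 2-edge one), then every vertex of
maximum degree in T has a neighbor of the same maximum degree. -/
theorem tree_index_three_max_degree_pairs {V : Type*} [Fintype V] [DecidableEq V]
    (G : SimpleGraph V) [DecidableRel G.Adj] (hT : G.IsTree)
    (h3 : ∃ φ : Sym2 V → Fin 3, IsLocIrrColoring G φ)
    (h2 : ¬ ∃ φ : Sym2 V → Fin 2, IsLocIrrColoring G φ) :
    ∀ v : V, G.degree v = G.maxDegree →
      ∃ w : V, G.Adj v w ∧ G.degree w = G.degree v :=
  tree_index_three_max_degree_pairs_general G hT h2
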